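/- Let ν be a Lévy measure on ℝ that is absolutely continuous with respect to Lebesgue measure, with ν(ℝ) = ∞ and ∫ |y|^k ν(dy) < ∞ for k = 2, 3, 4. Set c = √(√2 − 1). For Λ > 0 let ε = ε(Λ) > 0 be the unique solution of F(ε) := ∫_{{|y|>cε}} ν(dy) + ε^{−2} ∫_{{|y|≤cε}} y² ν(dy) = Λ (F is continuous, strictly decreasing, F(ε) → +∞ as ε ↓ 0 and F(ε) → 0 as ε → ∞), and define α_1 = (1/(2ε³)) ( − ∫_{{|y|≤cε}} y³ ν(dy) + ε ∫_{{|y|≤cε}} y² ν(dy) ) and α_2 = (1/(2ε³)) ( ∫_{{|y|≤cε}} y³ ν(dy) + ε ∫_{{|y|≤cε}} y² ν(dy) ). Then α_1 ≥ 0 and α_2 ≥ 0, the measure ν̄_ε(dy) = 1_{{|y|>cε}} ν(dy) + α_1 δ_{−ε}(dy) + α_2 δ_ε(dy) is a solution of problem Ω_{4,Λ}, and the optimal value satisfies E_4(Λ) = o(Λ^{−1}) as Λ → ∞. -/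

import Mathlib

open MeasureTheory Filter Set
open scoped ENNReal

/-- The total variation measure `|μ - ν| = (μ - μ⊓ν) + (ν - μ⊓ν)` of the difference of two
positive measures. -/
noncomputable def tvDist (μ ν : Measure ℝ) : Measure ℝ := (μ - μ ⊓ ν) + (ν - μ ⊓ ν)

/-- The functional `J(ν̄) = ∫ y⁴ |ν - ν̄|(dy)`. -/
noncomputable def Jfun4 (ν νb : Measure ℝ) : ℝ≥0∞ :=
  ∫⁻ y, ENNReal.ofReal (y ^ 4) ∂(tvDist ν νb)

/-- The constraint set of problem `Ω_{4,Λ}`: finite measures of mass `Λ` matching the second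
and third moments of `ν`. -/
def Constraint4 (ν : Measure ℝ) (Λ : ℝ) (νb : Measure ℝ) : Prop :=
  IsFiniteMeasure νb ∧ νb Set.univ = ENNReal.ofReal Λ ∧
    MeasureTheory.Integrable (fun y => y ^ 2) νb ∧ (∫ y, y ^ 2 ∂νb) = (∫ y, y ^ 2 ∂ν) ∧
    MeasureTheory.Integrable (fun y => y ^ 3) νb ∧ (∫ y, y ^ 3 ∂νb) = ∫ y, y ^ 3 ∂ν

/-- The constant `c = √(√2 - 1)`. -/
noncomputable def cConst : ℝ := Real.sqrt (Real.sqrt 2 - 1)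

/-- `α₁ = (1/(2ε³)) (−∫_{|y|≤cε} y³ ν(dy) + ε ∫_{|y|≤cε} y² ν(dy))`. -/
noncomputable def alpha₁ (ν : Measure ℝ) (ε : ℝ) : ℝ :=
  (1 / (2 * ε ^ 3)) * (-(∫ y in {y : ℝ | |y| ≤ cConst * ε}, y ^ 3 ∂ν)
    + ε * ∫ y in {y : ℝ | |y| ≤ cConst * ε}, y ^ 2 ∂ν)

/-- `α₂ = (1/(2ε³)) (∫_{|y|≤cε} y³ ν(dy) + ε ∫_{|y|≤cε} y² ν(dy))`. -/
noncomputable def alpha₂ (ν : Measure ℝ) (ε : ℝ) : ℝ :=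
  (1 / (2 * ε ^ 3)) * ((∫ y in {y : ℝ | |y| ≤ cConst * ε}, y ^ 3 ∂ν)
    + ε * ∫ y in {y : ℝ | |y| ≤ cConst * ε}, y ^ 2 ∂ν)

/-- The approximating measure `ν̄_ε = 1_{|y|>cε} ν + α₁ δ_{-ε} + α₂ δ_ε`. -/
noncomputable def approx4 (ν : Measure ℝ) (ε : ℝ) : Measure ℝ :=
  ν.restrict {y : ℝ | cConst * ε < |y|}
    + ENNReal.ofReal (alpha₁ ν ε) • Measure.dirac (-ε)
    + ENNReal.ofReal (alpha₂ ν ε) • Measure.dirac ε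

/-- The function `F(ε) = ∫_{|y|>cε} ν(dy) + ε⁻² ∫_{|y|≤cε} y² ν(dy)`. -/
noncomputable def F4 (ν : Measure ℝ) (ε : ℝ) : ℝ :=
  (ν {y : ℝ | cConst * ε < |y|}).toReal
    + ε⁻¹ ^ 2 * ∫ y in {y : ℝ | |y| ≤ cConst * ε}, y ^ 2 ∂ν


/-!
Optimality is weak duality. The certificate `φ(y) = min(y⁴, ε⁴ - 2ε²y²)` satisfies `|φ| ≤ y⁴`, so
`J(μ) ≥ ∫ φ dν - ∫ φ dμ` for every `μ`; as `φ ≤ ε⁴ - 2ε²y²`, the constraints bound `∫ φ dμ` by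
`ε⁴Λ - 2ε² ∫ y² dν`, and `F(ε) = Λ` turns this into
`J(μ) ≥ ∫_{|y|≤cε} y⁴ dν + ε² ∫_{|y|≤cε} y² dν`. Since `c⁴ + 2c² = 1`, `φ = y⁴` exactly on
`|y| ≤ cε`; `ν̄_ε` agrees with `ν` off that set and its atoms at `±ε` carry `y⁴`-mass
`ε² ∫_{|y|≤cε} y² dν`, so `ν̄_ε` attains the bound.

For the rate, `Λ E₄(Λ) ≤ 2Λε² ∫_{|y|≤cε} y² dν`; here `Λε²` stays bounded by Chebyshev's
inequality, and the truncated second moment vanishes because `ε(Λ) → 0`.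
-/

open scoped Topology

lemma cConst_sq : cConst ^ 2 = Real.sqrt 2 - 1 :=
  Real.sq_sqrt (by nlinarith [Real.sq_sqrt (zero_le_two : (0 : ℝ) ≤ 2), Real.sqrt_nonneg 2])

lemma cConst_pos : 0 < cConst :=
  Real.sqrt_pos.2 (by nlinarith [Real.sq_sqrt (zero_le_two : (0 : ℝ) ≤ 2), Real.sqrt_nonneg 2])

lemma cConst_lt_one : cConst < 1 := by
  nlinarith [cConst_sq, cConst_pos, Real.sq_sqrt (zero_le_two : (0 : ℝ) ≤ 2), Real.sqrt_nonneg 2]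

lemma cConst_sq_mul_cConst_sq_add_two : cConst ^ 2 * (cConst ^ 2 + 2) = 1 := by
  rw [cConst_sq]
  linear_combination Real.sq_sqrt (zero_le_two : (0 : ℝ) ≤ 2)

/-- The two branches of `dualFn e` cross exactly at `|y| = c e`. -/
lemma quartic_sub_eq_mul (e y : ℝ) :
    e ^ 4 - 2 * e ^ 2 * y ^ 2 - y ^ 4
      = (cConst ^ 2 * e ^ 2 - y ^ 2) * (y ^ 2 + (cConst ^ 2 + 2) * e ^ 2) := by
  linear_combination (-e ^ 4) * cConst_sq_mul_cConst_sq_add_two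

/-- The dual certificate of problem `Ω_{4,Λ}` at scale `e`: a Lagrangian combination
`e⁴ - 2e²y²` of the constraint functions, capped by the cost density `y⁴`. -/
noncomputable def dualFn (e y : ℝ) : ℝ := min (y ^ 4) (e ^ 4 - 2 * e ^ 2 * y ^ 2)

lemma dualFn_le_pow_four (e y : ℝ) : dualFn e y ≤ y ^ 4 := min_le_left _ _

lemma dualFn_le_quadratic (e y : ℝ) : dualFn e y ≤ e ^ 4 - 2 * e ^ 2 * y ^ 2 :=
  min_le_right _ _

lemma abs_dualFn_le_pow_four (e y : ℝ) : |dualFn e y| ≤ y ^ 4 :=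
  abs_le.2 ⟨le_min (by nlinarith [sq_nonneg (y ^ 2)]) (by nlinarith [sq_nonneg (y ^ 2 - e ^ 2)]),
    dualFn_le_pow_four e y⟩

lemma abs_dualFn_le_quadratic (e y : ℝ) : |dualFn e y| ≤ e ^ 4 + 2 * e ^ 2 * y ^ 2 :=
  abs_le.2 ⟨le_min (by nlinarith [sq_nonneg (y ^ 2), sq_nonneg (e * y)])
    (by nlinarith [sq_nonneg (e ^ 2)]),
    (dualFn_le_quadratic e y).trans (by nlinarith [sq_nonneg (e * y)])⟩

lemma continuous_dualFn (e : ℝ) : Continuous (dualFn e) := by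
  unfold dualFn
  fun_prop

lemma dualFn_of_abs_le {e y : ℝ} (h : |y| ≤ cConst * e) : dualFn e y = y ^ 4 := by
  have hy : y ^ 2 ≤ cConst ^ 2 * e ^ 2 := by
    rw [← sq_abs, ← mul_pow]
    exact pow_le_pow_left₀ (abs_nonneg y) h 2
  refine min_eq_left (sub_nonneg.1 ?_)
  rw [quartic_sub_eq_mul]
  exact mul_nonneg (sub_nonneg.2 hy) (by positivity)

lemma dualFn_of_le_abs {e y : ℝ} (he : 0 ≤ e) (h : cConst * e ≤ |y|) :
    dualFn e y = e ^ 4 - 2 * e ^ 2 * y ^ 2 := by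
  have hy : cConst ^ 2 * e ^ 2 ≤ y ^ 2 := by
    rw [← sq_abs y, ← mul_pow]
    exact pow_le_pow_left₀ (mul_nonneg cConst_pos.le he) h 2
  refine min_eq_right (sub_nonpos.1 ?_)
  rw [quartic_sub_eq_mul]
  exact mul_nonpos_of_nonpos_of_nonneg (sub_nonpos.2 hy) (by positivity)

def smallJumps (e : ℝ) : Set ℝ := {y | |y| ≤ cConst * e}

def bigJumps (e : ℝ) : Set ℝ := {y | cConst * e < |y|}

lemma measurableSet_smallJumps (e : ℝ) : MeasurableSet (smallJumps e) :=
  (isClosed_le continuous_abs continuous_const).measurableSet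

lemma measurableSet_bigJumps (e : ℝ) : MeasurableSet (bigJumps e) :=
  (isOpen_lt continuous_const continuous_abs).measurableSet

lemma compl_smallJumps (e : ℝ) : (smallJumps e)ᶜ = bigJumps e := by
  ext y
  simp [smallJumps, bigJumps]

lemma bigJumps_subset {e e' : ℝ} (h : e ≤ e') : bigJumps e' ⊆ bigJumps e := fun _ hy =>
  (mul_le_mul_of_nonneg_left h cConst_pos.le).trans_lt hy

lemma integrable_of_lintegral_ofReal_lt_top {α : Type*} [MeasurableSpace α] {f : α → ℝ}
    {ν : Measure α} (hf : Measurable f) (h0 : 0 ≤ f) (h : ∫⁻ y, ENNReal.ofReal (f y) ∂ν < ⊤) :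
    Integrable f ν :=
  ⟨hf.aestronglyMeasurable, (hasFiniteIntegral_iff_ofReal (ae_of_all _ h0)).2 h⟩

section Moments

variable {ν : Measure ℝ} {e : ℝ}

noncomputable def truncMoment (ν : Measure ℝ) (k : ℕ) (e : ℝ) : ℝ :=
  ∫ y in smallJumps e, y ^ k ∂ν

lemma F4_eq (ν : Measure ℝ) (e : ℝ) :
    F4 ν e = (ν (bigJumps e)).toReal + e⁻¹ ^ 2 * truncMoment ν 2 e := rfl

lemma truncMoment_nonneg (ν : Measure ℝ) {k : ℕ} (hk : Even k) (e : ℝ) :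
    0 ≤ truncMoment ν k e :=
  setIntegral_nonneg (measurableSet_smallJumps e) fun _ _ => hk.pow_nonneg _

lemma truncMoment_two_le (h2 : Integrable (fun y => y ^ 2) ν) (e : ℝ) :
    truncMoment ν 2 e ≤ ∫ y, y ^ 2 ∂ν :=
  setIntegral_le_integral h2 (ae_of_all _ fun y => sq_nonneg y)

lemma integral_bigJumps_add_truncMoment {k : ℕ} (h : Integrable (fun y => y ^ k) ν) (e : ℝ) :
    ∫ y in bigJumps e, y ^ k ∂ν + truncMoment ν k e = ∫ y, y ^ k ∂ν := by
  rw [add_comm, truncMoment, ← compl_smallJumps, integral_add_compl (measurableSet_smallJumps e) h]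

lemma sq_lt_sq_of_mem_bigJumps {y : ℝ} (he : 0 ≤ e) (hy : y ∈ bigJumps e) :
    (cConst * e) ^ 2 < y ^ 2 := by
  rw [← sq_abs y]
  exact pow_lt_pow_left₀ hy (mul_nonneg cConst_pos.le he) two_ne_zero

lemma abs_le_of_mem_smallJumps {y : ℝ} (he : 0 ≤ e) (hy : y ∈ smallJumps e) : |y| ≤ e :=
  hy.trans (mul_le_of_le_one_left he cConst_lt_one.le)

lemma truncMoment_four_le (h2 : Integrable (fun y => y ^ 2) ν) (he : 0 ≤ e) :
    truncMoment ν 4 e ≤ e ^ 2 * truncMoment ν 2 e := by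
  rw [truncMoment, truncMoment, ← integral_const_mul]
  refine integral_mono_of_nonneg (ae_of_all _ fun y => by positivity) (h2.const_mul _).restrict
    ((ae_restrict_iff' (measurableSet_smallJumps e)).2 (ae_of_all _ fun y hy => ?_))
  have hy2 : y ^ 2 ≤ e ^ 2 := by
    rw [← sq_abs y]
    exact pow_le_pow_left₀ (abs_nonneg y) (abs_le_of_mem_smallJumps he hy) 2
  nlinarith [sq_nonneg y]

lemma abs_truncMoment_three_le (h2 : Integrable (fun y => y ^ 2) ν) (he : 0 ≤ e) :
    |truncMoment ν 3 e| ≤ e * truncMoment ν 2 e := by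
  calc |truncMoment ν 3 e| ≤ ∫ y in smallJumps e, e * y ^ 2 ∂ν :=
        norm_integral_le_of_norm_le (h2.const_mul e).restrict
          ((ae_restrict_iff' (measurableSet_smallJumps e)).2 (ae_of_all _ fun y hy => by
            rw [Real.norm_eq_abs, abs_pow, pow_succ, ← sq_abs y, mul_comm]
            exact mul_le_mul_of_nonneg_right (abs_le_of_mem_smallJumps he hy) (sq_nonneg _)))
    _ = e * truncMoment ν 2 e := integral_const_mul e _

lemma alpha₁_add_alpha₂ (he : e ≠ 0) :
    alpha₁ ν e + alpha₂ ν e = truncMoment ν 2 e / e ^ 2 := by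
  simp only [alpha₁, alpha₂, truncMoment, smallJumps]
  field_simp
  ring

lemma alpha₂_sub_alpha₁ (he : e ≠ 0) :
    alpha₂ ν e - alpha₁ ν e = truncMoment ν 3 e / e ^ 3 := by
  simp only [alpha₁, alpha₂, truncMoment, smallJumps]
  field_simp
  ring

lemma alpha₁_nonneg (h2 : Integrable (fun y => y ^ 2) ν) (he : 0 < e) : 0 ≤ alpha₁ ν e := by
  have h := (abs_le.1 (abs_truncMoment_three_le h2 he.le)).2
  simp only [truncMoment, smallJumps] at h
  exact mul_nonneg (by positivity) (by linarith)

lemma alpha₂_nonneg (h2 : Integrable (fun y => y ^ 2) ν) (he : 0 < e) : 0 ≤ alpha₂ ν e := by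
  have h := (abs_le.1 (abs_truncMoment_three_le h2 he.le)).1
  simp only [truncMoment, smallJumps] at h
  exact mul_nonneg (by positivity) (by linarith)

lemma measure_bigJumps_lt_top (h2 : Integrable (fun y => y ^ 2) ν) (he : 0 < e) :
    ν (bigJumps e) < ⊤ := by
  refine (measure_mono fun y hy => ?_).trans_lt
    (h2.measure_norm_ge_lt_top (ε := (cConst * e) ^ 2) (by have := cConst_pos; positivity))
  simpa [abs_of_nonneg (sq_nonneg y)] using (sq_lt_sq_of_mem_bigJumps he.le hy).le

lemma sq_mul_measure_bigJumps_le (h2 : Integrable (fun y => y ^ 2) ν) (he : 0 < e) :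
    (cConst * e) ^ 2 * (ν (bigJumps e)).toReal ≤ ∫ y, y ^ 2 ∂ν := by
  have hfin := measure_bigJumps_lt_top h2 he
  calc (cConst * e) ^ 2 * (ν (bigJumps e)).toReal = ∫ _ in bigJumps e, (cConst * e) ^ 2 ∂ν := by
        rw [setIntegral_const, smul_eq_mul, measureReal_def, mul_comm]
    _ ≤ ∫ y in bigJumps e, y ^ 2 ∂ν :=
        setIntegral_mono_on (integrableOn_const hfin.ne) h2.integrableOn
          (measurableSet_bigJumps e) fun y hy => (sq_lt_sq_of_mem_bigJumps he.le hy).le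
    _ ≤ ∫ y, y ^ 2 ∂ν := setIntegral_le_integral h2 (ae_of_all _ fun y => sq_nonneg y)

end Moments

section Approx

variable {ν : Measure ℝ} {e : ℝ}

lemma approx4_eq (ν : Measure ℝ) (e : ℝ) :
    approx4 ν e = ν.restrict (bigJumps e)
      + (ENNReal.ofReal (alpha₁ ν e) • Measure.dirac (-e)
        + ENNReal.ofReal (alpha₂ ν e) • Measure.dirac e) :=
  add_assoc _ _ _

lemma integrable_smul_dirac (f : ℝ → ℝ) (a : ℝ) (c : ℝ) :
    Integrable f (ENNReal.ofReal c • Measure.dirac a) :=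
  (integrable_dirac enorm_lt_top).smul_measure ENNReal.ofReal_ne_top

lemma integrable_approx4 {f : ℝ → ℝ} (hf : Integrable f ν) : Integrable f (approx4 ν e) := by
  rw [approx4_eq]
  exact hf.restrict.add_measure ((integrable_smul_dirac f _ _).add_measure
    (integrable_smul_dirac f _ _))

lemma integral_approx4 {f : ℝ → ℝ} (hf : Integrable f ν) (h2 : Integrable (fun y => y ^ 2) ν)
    (he : 0 < e) :
    ∫ y, f y ∂approx4 ν e = ∫ y in bigJumps e, f y ∂ν + alpha₁ ν e * f (-e) + alpha₂ ν e * f e := by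
  rw [approx4_eq, integral_add_measure hf.restrict
      ((integrable_smul_dirac f _ _).add_measure (integrable_smul_dirac f _ _)),
    integral_add_measure (integrable_smul_dirac f _ _) (integrable_smul_dirac f _ _),
    integral_smul_measure, integral_smul_measure, integral_dirac, integral_dirac,
    ENNReal.toReal_ofReal (alpha₁_nonneg h2 he), ENNReal.toReal_ofReal (alpha₂_nonneg h2 he),
    smul_eq_mul, smul_eq_mul, add_assoc]

lemma approx4_univ (ν : Measure ℝ) (e : ℝ) :
    approx4 ν e Set.univ
      = ν (bigJumps e) + ENNReal.ofReal (alpha₁ ν e) + ENNReal.ofReal (alpha₂ ν e) := by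
  simp [approx4, bigJumps]

lemma constraint4_approx4 (h2 : Integrable (fun y => y ^ 2) ν)
    (h3 : Integrable (fun y => y ^ 3) ν) (he : 0 < e) :
    Constraint4 ν (F4 ν e) (approx4 ν e) := by
  have hfin := measure_bigJumps_lt_top h2 he
  have hsum := alpha₁_add_alpha₂ (ν := ν) he.ne'
  have hdiff := alpha₂_sub_alpha₁ (ν := ν) he.ne'
  have hα₁ := alpha₁_nonneg h2 he
  have hα₂ := alpha₂_nonneg h2 he
  refine ⟨⟨?_⟩, ?_, integrable_approx4 h2, ?_, integrable_approx4 h3, ?_⟩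
  · rw [approx4_univ]
    exact ENNReal.add_lt_top.2 ⟨ENNReal.add_lt_top.2 ⟨hfin, ENNReal.ofReal_lt_top⟩,
      ENNReal.ofReal_lt_top⟩
  · have hF : F4 ν e = (ν (bigJumps e)).toReal + alpha₁ ν e + alpha₂ ν e := by
      rw [F4_eq, add_assoc, hsum, div_eq_inv_mul, inv_pow]
    rw [approx4_univ, hF, ENNReal.ofReal_add (by positivity) hα₂,
      ENNReal.ofReal_add ENNReal.toReal_nonneg hα₁, ENNReal.ofReal_toReal hfin.ne]
  · rw [integral_approx4 h2 h2 he, ← integral_bigJumps_add_truncMoment h2 e,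
      ← (eq_div_iff (by positivity)).1 hsum]
    ring
  · rw [integral_approx4 h3 h2 he, ← integral_bigJumps_add_truncMoment h3 e,
      ← (eq_div_iff (by positivity)).1 hdiff]
    ring

lemma tvDist_add_add_le (ρ α β : Measure ℝ) : tvDist (ρ + α) (ρ + β) ≤ α + β := by
  have hρ : ρ ≤ (ρ + α) ⊓ (ρ + β) :=
    le_inf (Measure.le_add_right le_rfl) (Measure.le_add_right le_rfl)
  refine add_le_add (Measure.sub_le_of_le_add ?_) (Measure.sub_le_of_le_add ?_)
  · exact (add_comm ρ α).trans_le (add_le_add le_rfl hρ)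
  · exact (add_comm ρ β).trans_le (add_le_add le_rfl hρ)

lemma Jfun4_approx4_le (h2 : Integrable (fun y => y ^ 2) ν) (h4 : Integrable (fun y => y ^ 4) ν)
    (he : 0 < e) :
    Jfun4 ν (approx4 ν e) ≤ ENNReal.ofReal (truncMoment ν 4 e + e ^ 2 * truncMoment ν 2 e) := by
  have hα₁ := alpha₁_nonneg h2 he
  have hα₂ := alpha₂_nonneg h2 he
  have hm4 := truncMoment_nonneg ν (by decide : Even 4) e
  have hsplit : ν = ν.restrict (bigJumps e) + ν.restrict (smallJumps e) := by
    rw [add_comm, ← compl_smallJumps,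
      Measure.restrict_add_restrict_compl (measurableSet_smallJumps e)]
  have htv := tvDist_add_add_le (ν.restrict (bigJumps e)) (ν.restrict (smallJumps e))
    (ENNReal.ofReal (alpha₁ ν e) • Measure.dirac (-e)
      + ENNReal.ofReal (alpha₂ ν e) • Measure.dirac e)
  rw [← hsplit, ← approx4_eq] at htv
  have hatoms : truncMoment ν 4 e + e ^ 2 * truncMoment ν 2 e
      = truncMoment ν 4 e + alpha₁ ν e * (-e) ^ 4 + alpha₂ ν e * e ^ 4 := by
    rw [← (eq_div_iff (by positivity)).1 (alpha₁_add_alpha₂ (ν := ν) he.ne')]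
    ring
  calc Jfun4 ν (approx4 ν e)
      ≤ ∫⁻ y, ENNReal.ofReal (y ^ 4) ∂(ν.restrict (smallJumps e)
          + (ENNReal.ofReal (alpha₁ ν e) • Measure.dirac (-e)
            + ENNReal.ofReal (alpha₂ ν e) • Measure.dirac e)) := lintegral_mono' htv le_rfl
    _ = ENNReal.ofReal (truncMoment ν 4 e + e ^ 2 * truncMoment ν 2 e) := by
      rw [lintegral_add_measure, lintegral_add_measure, lintegral_smul_measure,
        lintegral_smul_measure, lintegral_dirac, lintegral_dirac, smul_eq_mul, smul_eq_mul,
        ← ofReal_integral_eq_lintegral_ofReal h4.restrict (ae_of_all _ fun y => by positivity),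
        ← ENNReal.ofReal_mul hα₁, ← ENNReal.ofReal_mul hα₂, hatoms,
        ENNReal.ofReal_add (add_nonneg hm4 (by positivity)) (by positivity),
        ENNReal.ofReal_add hm4 (by positivity), add_assoc]
      rfl

end Approx

lemma ofReal_integral_sub_le_lintegral_tvDist {ν μ : Measure ℝ} [IsFiniteMeasure μ]
    {φ g : ℝ → ℝ} (hφ : Measurable φ) (hg : Measurable g) (hφg : ∀ y, |φ y| ≤ g y)
    (hgν : Integrable g ν) :
    ENNReal.ofReal (∫ y, φ y ∂ν - ∫ y, φ y ∂μ) ≤ ∫⁻ y, ENNReal.ofReal (g y) ∂tvDist ν μ := by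
  rw [tvDist, lintegral_add_measure]
  set η := ν ⊓ μ
  have : IsFiniteMeasure η := isFiniteMeasure_of_le μ inf_le_right
  have hg0 : 0 ≤ g := fun y => (abs_nonneg _).trans (hφg y)
  by_cases hμg : ∫⁻ y, ENNReal.ofReal (g y) ∂(μ - η) = ⊤
  · simp [hμg]
  have hgν' : Integrable g (ν - η) := hgν.mono_measure Measure.sub_le
  have hgμ' : Integrable g (μ - η) :=
    integrable_of_lintegral_ofReal_lt_top hg hg0 (lt_top_iff_ne_top.2 hμg)
  have hφ_of {ρ : Measure ℝ} (h : Integrable g ρ) : Integrable φ ρ :=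
    h.mono hφ.aestronglyMeasurable (ae_of_all _ fun y => by
      simpa [Real.norm_eq_abs, abs_of_nonneg (hg0 y)] using hφg y)
  have hφη : Integrable φ η := hφ_of (hgν.mono_measure inf_le_left)
  have hν : ν - η + η = ν := Measure.sub_add_cancel_of_le inf_le_left
  have hμ : μ - η + η = μ := Measure.sub_add_cancel_of_le inf_le_right
  have hdiff : ∫ y, φ y ∂ν - ∫ y, φ y ∂μ = ∫ y, φ y ∂(ν - η) - ∫ y, φ y ∂(μ - η) := by
    conv_lhs => rw [← hν, ← hμ]
    rw [integral_add_measure (hφ_of hgν') hφη, integral_add_measure (hφ_of hgμ') hφη]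
    ring
  have hν_le : ∫ y, φ y ∂(ν - η) ≤ ∫ y, g y ∂(ν - η) :=
    integral_mono (hφ_of hgν') hgν' fun y => (le_abs_self _).trans (hφg y)
  have hμ_le : -∫ y, φ y ∂(μ - η) ≤ ∫ y, g y ∂(μ - η) := by
    rw [← integral_neg]
    exact integral_mono (hφ_of hgμ').neg hgμ' fun y => (neg_le_abs _).trans (hφg y)
  rw [← ofReal_integral_eq_lintegral_ofReal hgν' (ae_of_all _ hg0),
    ← ofReal_integral_eq_lintegral_ofReal hgμ' (ae_of_all _ hg0),
    ← ENNReal.ofReal_add (integral_nonneg hg0) (integral_nonneg hg0), hdiff]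
  exact ENNReal.ofReal_le_ofReal (by linarith)

section Duality

variable {ν μ : Measure ℝ} {e : ℝ}

lemma integrable_dualFn_of_pow_four (h4 : Integrable (fun y => y ^ 4) ν) :
    Integrable (dualFn e) ν :=
  h4.mono' (continuous_dualFn e).aestronglyMeasurable
    (ae_of_all _ (abs_dualFn_le_pow_four e))

lemma integrable_dualFn_of_sq [IsFiniteMeasure μ] (h2 : Integrable (fun y => y ^ 2) μ) :
    Integrable (dualFn e) μ :=
  ((integrable_const (e ^ 4)).add (h2.const_mul (2 * e ^ 2))).mono'
    (continuous_dualFn e).aestronglyMeasurable (ae_of_all _ (abs_dualFn_le_quadratic e))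

lemma integral_dualFn (h2 : Integrable (fun y => y ^ 2) ν) (h4 : Integrable (fun y => y ^ 4) ν)
    (he : 0 < e) :
    ∫ y, dualFn e y ∂ν = truncMoment ν 4 e + e ^ 4 * (ν (bigJumps e)).toReal
      - 2 * e ^ 2 * ∫ y in bigJumps e, y ^ 2 ∂ν := by
  have := isFiniteMeasure_restrict.2 (measure_bigJumps_lt_top h2 he).ne
  rw [← integral_add_compl (measurableSet_smallJumps e) (integrable_dualFn_of_pow_four h4),
    compl_smallJumps, setIntegral_congr_fun (measurableSet_smallJumps e)
      fun y hy => dualFn_of_abs_le hy,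
    setIntegral_congr_fun (measurableSet_bigJumps e) fun y hy => dualFn_of_le_abs he.le hy.le,
    integral_sub (integrable_const _) (h2.const_mul _).restrict, setIntegral_const,
    integral_const_mul, truncMoment, smul_eq_mul, measureReal_def]
  ring

lemma integral_dualFn_le_of_constraint4 {Λ : ℝ} (hΛ : 0 ≤ Λ) (hμ : Constraint4 ν Λ μ) :
    ∫ y, dualFn e y ∂μ ≤ e ^ 4 * Λ - 2 * e ^ 2 * ∫ y, y ^ 2 ∂ν := by
  obtain ⟨hfin, hmass, hμ2, hmom2, -, -⟩ := hμ
  calc ∫ y, dualFn e y ∂μ ≤ ∫ y, (e ^ 4 - 2 * e ^ 2 * y ^ 2) ∂μ :=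
        integral_mono (integrable_dualFn_of_sq hμ2) ((integrable_const _).sub (hμ2.const_mul _))
          (dualFn_le_quadratic e)
    _ = e ^ 4 * Λ - 2 * e ^ 2 * ∫ y, y ^ 2 ∂ν := by
      rw [integral_sub (integrable_const _) (hμ2.const_mul _), integral_const, integral_const_mul,
        hmom2, measureReal_def, hmass, ENNReal.toReal_ofReal hΛ, smul_eq_mul, mul_comm Λ]

lemma Jfun4_ge_of_constraint4 (h2 : Integrable (fun y => y ^ 2) ν)
    (h4 : Integrable (fun y => y ^ 4) ν) (he : 0 < e) (hμ : Constraint4 ν (F4 ν e) μ) :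
    ENNReal.ofReal (truncMoment ν 4 e + e ^ 2 * truncMoment ν 2 e) ≤ Jfun4 ν μ := by
  have hF : 0 ≤ F4 ν e := by
    rw [F4_eq]
    exact add_nonneg ENNReal.toReal_nonneg
      (mul_nonneg (by positivity) (truncMoment_nonneg ν even_two e))
  have hupper := integral_dualFn_le_of_constraint4 (e := e) hF hμ
  have hφν := integral_dualFn h2 h4 he
  have hsplit := integral_bigJumps_add_truncMoment h2 e
  have hscale : e ^ 4 * F4 ν e = e ^ 4 * (ν (bigJumps e)).toReal + e ^ 2 * truncMoment ν 2 e := by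
    rw [F4_eq]
    field_simp
  rw [hscale, ← hsplit, mul_add] at hupper
  have := hμ.1
  refine le_trans (ENNReal.ofReal_le_ofReal ?_) (ofReal_integral_sub_le_lintegral_tvDist
    (continuous_dualFn e).measurable (by fun_prop) (abs_dualFn_le_pow_four e) h4)
  linarith

end Duality

section Asymptotics

variable {ν : Measure ℝ} {e : ℝ}

lemma tendsto_truncMoment_two (h2 : Integrable (fun y => y ^ 2) ν) :
    Tendsto (truncMoment ν 2) (𝓝 0) (𝓝 0) := by
  have hind : truncMoment ν 2 = fun e => ∫ y, (smallJumps e).indicator (fun y => y ^ 2) y ∂ν :=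
    funext fun e => (integral_indicator (measurableSet_smallJumps e)).symm
  have hlim (y : ℝ) :
      Tendsto (fun e => (smallJumps e).indicator (fun y => y ^ 2) y) (𝓝 0) (𝓝 0) := by
    rcases eq_or_ne y 0 with rfl | hy
    · refine tendsto_const_nhds.congr fun e => ?_
      rw [eq_comm, Set.indicator_apply_eq_zero]
      exact fun _ => zero_pow two_ne_zero
    have hsmall : ∀ᶠ e in 𝓝 0, cConst * e < |y| :=
      ((continuous_const.mul continuous_id).tendsto' 0 0 (by simp)).eventually
        (gt_mem_nhds (abs_pos.2 hy))
    exact tendsto_const_nhds.congr' (hsmall.mono fun e he =>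
      (Set.indicator_of_notMem (s := smallJumps e) (not_le.2 he) _).symm)
  simpa [hind] using tendsto_integral_filter_of_dominated_convergence (fun y => y ^ 2)
    (.of_forall fun e => (h2.indicator (measurableSet_smallJumps e)).aestronglyMeasurable)
    (.of_forall fun e => ae_of_all _ fun y => by
      rw [Real.norm_eq_abs, abs_of_nonneg (Set.indicator_nonneg (fun _ _ => sq_nonneg _) _)]
      exact Set.indicator_le_self' (fun _ _ => sq_nonneg _) y)
    h2 (ae_of_all _ hlim)

lemma F4_nonneg (ν : Measure ℝ) (e : ℝ) : 0 ≤ F4 ν e :=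
  add_nonneg ENNReal.toReal_nonneg (mul_nonneg (by positivity) (truncMoment_nonneg ν even_two e))

lemma F4_le_of_le (h2 : Integrable (fun y => y ^ 2) ν) {a : ℝ} (ha : 0 < a) (hae : a ≤ e) :
    F4 ν e ≤ (ν (bigJumps a)).toReal + a⁻¹ ^ 2 * ∫ y, y ^ 2 ∂ν := by
  rw [F4_eq]
  gcongr ?_ + ?_
  · exact ENNReal.toReal_mono (measure_bigJumps_lt_top h2 ha).ne
      (measure_mono (bigJumps_subset hae))
  · exact mul_le_mul (pow_le_pow_left₀ (inv_pos.2 (ha.trans_le hae)).le (inv_anti₀ ha hae) 2)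
      (truncMoment_two_le h2 e) (truncMoment_nonneg ν even_two e) (by positivity)

lemma tendsto_zero_of_F4_eq (h2 : Integrable (fun y => y ^ 2) ν) {ε : ℝ → ℝ}
    (hε : ∀ Λ, 0 < Λ → 0 < ε Λ) (hεdef : ∀ Λ, 0 < Λ → F4 ν (ε Λ) = Λ) :
    Tendsto ε atTop (𝓝 0) := by
  refine tendsto_order.2 ⟨fun a ha => ?_, fun a ha => ?_⟩
  · filter_upwards [eventually_gt_atTop 0] with Λ hΛ using ha.trans (hε Λ hΛ)
  · filter_upwards [eventually_gt_atTop 0,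
      eventually_gt_atTop ((ν (bigJumps a)).toReal + a⁻¹ ^ 2 * ∫ y, y ^ 2 ∂ν)] with Λ hΛ hΛa
    by_contra! hle
    have := F4_le_of_le h2 ha hle
    rw [hεdef Λ hΛ] at this
    exact this.not_gt hΛa

lemma F4_mul_toReal_Jfun4_approx4_le (h2 : Integrable (fun y => y ^ 2) ν)
    (h4 : Integrable (fun y => y ^ 4) ν) (he : 0 < e) :
    F4 ν e * (Jfun4 ν (approx4 ν e)).toReal
      ≤ 2 * ((∫ y, y ^ 2 ∂ν) / cConst ^ 2 * truncMoment ν 2 e + truncMoment ν 2 e ^ 2) := by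
  have hm2 := truncMoment_nonneg ν even_two e
  have hJ : (Jfun4 ν (approx4 ν e)).toReal ≤ 2 * e ^ 2 * truncMoment ν 2 e :=
    ENNReal.toReal_le_of_le_ofReal (by positivity) ((Jfun4_approx4_le h2 h4 he).trans
      (ENNReal.ofReal_le_ofReal (by linarith [truncMoment_four_le h2 he.le])))
  have hbig : e ^ 2 * (ν (bigJumps e)).toReal ≤ (∫ y, y ^ 2 ∂ν) / cConst ^ 2 := by
    rw [le_div_iff₀ (pow_pos cConst_pos 2)]
    linarith [sq_mul_measure_bigJumps_le h2 he]
  calc F4 ν e * (Jfun4 ν (approx4 ν e)).toReal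
      ≤ F4 ν e * (2 * e ^ 2 * truncMoment ν 2 e) := mul_le_mul_of_nonneg_left hJ (F4_nonneg ν e)
    _ = 2 * (e ^ 2 * (ν (bigJumps e)).toReal * truncMoment ν 2 e + truncMoment ν 2 e ^ 2) := by
      rw [F4_eq]
      field_simp
    _ ≤ 2 * ((∫ y, y ^ 2 ∂ν) / cConst ^ 2 * truncMoment ν 2 e + truncMoment ν 2 e ^ 2) := by
      gcongr

end Asymptotics

theorem stmt_11_general (ν : Measure ℝ)
    (hν2 : (∫⁻ y, ENNReal.ofReal (y ^ 2) ∂ν) < ⊤)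
    (hν3 : (∫⁻ y, ENNReal.ofReal (|y| ^ 3) ∂ν) < ⊤)
    (hν4 : (∫⁻ y, ENNReal.ofReal (y ^ 4) ∂ν) < ⊤)
    (ε : ℝ → ℝ)
    (hε : ∀ Λ, 0 < Λ → 0 < ε Λ)
    (hεdef : ∀ Λ, 0 < Λ → F4 ν (ε Λ) = Λ) :
    (∀ Λ, 0 < Λ →
      0 ≤ alpha₁ ν (ε Λ) ∧ 0 ≤ alpha₂ ν (ε Λ) ∧
      Constraint4 ν Λ (approx4 ν (ε Λ)) ∧
      ∀ μ : Measure ℝ, Constraint4 ν Λ μ → Jfun4 ν (approx4 ν (ε Λ)) ≤ Jfun4 ν μ) ∧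
    Filter.Tendsto (fun Λ => Λ * (Jfun4 ν (approx4 ν (ε Λ))).toReal)
      Filter.atTop (nhds 0) := by
  have h2 := integrable_of_lintegral_ofReal_lt_top (by fun_prop) (fun y => sq_nonneg y) hν2
  have h3 : Integrable (fun y : ℝ => y ^ 3) ν :=
    (integrable_norm_iff (by fun_prop)).1 <| by
      simpa [abs_pow] using
        integrable_of_lintegral_ofReal_lt_top (by fun_prop) (fun y => by positivity) hν3
  have h4 := integrable_of_lintegral_ofReal_lt_top (by fun_prop) (fun y => by positivity) hν4
  refine ⟨fun Λ hΛ => ?_, ?_⟩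
  · have he := hε Λ hΛ
    have hF := hεdef Λ hΛ
    refine ⟨alpha₁_nonneg h2 he, alpha₂_nonneg h2 he, ?_, fun μ hμ =>
      (Jfun4_approx4_le h2 h4 he).trans (Jfun4_ge_of_constraint4 h2 h4 he (by rwa [hF]))⟩
    simpa only [hF] using constraint4_approx4 h2 h3 he
  · have hm2 := (tendsto_truncMoment_two h2).comp (tendsto_zero_of_F4_eq h2 hε hεdef)
    have hbound := ((hm2.const_mul ((∫ y, y ^ 2 ∂ν) / cConst ^ 2)).add (hm2.pow 2)).const_mul 2
    simp only [mul_zero, zero_add, ne_eq, OfNat.ofNat_ne_zero, not_false_eq_true, zero_pow]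
      at hbound
    refine tendsto_of_tendsto_of_tendsto_of_le_of_le' tendsto_const_nhds hbound ?_ ?_
    · filter_upwards [eventually_ge_atTop 0] with Λ hΛ using mul_nonneg hΛ ENNReal.toReal_nonneg
    · filter_upwards [eventually_gt_atTop 0] with Λ hΛ
      simpa [hεdef Λ hΛ] using F4_mul_toReal_Jfun4_approx4_le h2 h4 (hε Λ hΛ)

/-- The case `n = 4`: `α₁, α₂ ≥ 0`, the measure `ν̄_ε = 1_{|y|>cε} ν + α₁ δ_{-ε} + α₂ δ_ε`
(with `ε = ε(Λ)` the unique solution of `F(ε) = Λ`) solves problem `Ω_{4,Λ}`, and the optimal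
value satisfies `E_4(Λ) = o(Λ^{-1})` as `Λ → ∞`. -/
theorem stmt_11 (ν : Measure ℝ)
    (hν0 : ν {0} = 0) (hac : ν ≪ volume) (hνinf : ν Set.univ = ⊤)
    (hν2 : (∫⁻ y, ENNReal.ofReal (y ^ 2) ∂ν) < ⊤)
    (hν3 : (∫⁻ y, ENNReal.ofReal (|y| ^ 3) ∂ν) < ⊤)
    (hν4 : (∫⁻ y, ENNReal.ofReal (y ^ 4) ∂ν) < ⊤)
    (ε : ℝ → ℝ)
    (hε : ∀ Λ, 0 < Λ → 0 < ε Λ)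
    (hεdef : ∀ Λ, 0 < Λ → F4 ν (ε Λ) = Λ) :
    (∀ Λ, 0 < Λ →
      0 ≤ alpha₁ ν (ε Λ) ∧ 0 ≤ alpha₂ ν (ε Λ) ∧
      Constraint4 ν Λ (approx4 ν (ε Λ)) ∧
      ∀ μ : Measure ℝ, Constraint4 ν Λ μ → Jfun4 ν (approx4 ν (ε Λ)) ≤ Jfun4 ν μ) ∧
    Filter.Tendsto (fun Λ => Λ * (Jfun4 ν (approx4 ν (ε Λ))).toReal)
      Filter.atTop (nhds 0) :=
  stmt_11_general ν hν2 hν3 hν4 ε hε hεdef
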